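/- For every real p, the curve d(ω) = cos(ω/2) + sin(ω/2)k + (p/2)sin(ω)·ε(sin(ω/2) − cos(ω/2)k) satisfies (1 + pε·cos²(ω/2))·d(ω) = cos(ω/2)(1 + pε) + sin(ω/2)k for all ω; consequently d(ω) always lies in the real span of the two dual quaternions 1 + pε and k. -/

import Mathlib

/-!
Left multiplication by `1 + aε` leaves the real part of a dual quaternion alone and adds `a`
times the real part to the dual part. For `a = p cos²(ω/2)`, after `sin ω = 2 sin(ω/2) cos(ω/2)`,
the `k`-components of the dual part cancel and `sin² + cos² = 1` collapses it to `p cos(ω/2)`,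
the dual part of `cos(ω/2)(1 + pε) + sin(ω/2)k`. The factor `1 + aε` is a unit, its real part
being `1`.
-/

open TrivSqZeroExt Real

noncomputable section

/-- The quaternion unit `k`. -/
def kQ : Quaternion ℝ := ⟨0, 0, 0, 1⟩

/-- The vertical Darboux motion `d(ω)` with amplitude `p`. -/
def darboux (p : ℝ) (ω : ℝ) : DualNumber (Quaternion ℝ) :=
  inl ((cos (ω / 2) : ℝ) + (sin (ω / 2) : ℝ) • kQ)
    + inr ((p / 2 * sin ω) • ((sin (ω / 2) : ℝ) • (1 : Quaternion ℝ) - (cos (ω / 2)) • kQ))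

namespace DualNumber

variable {R A : Type*} [CommRing R] [Ring A] [Algebra R A]

theorem isUnit_one_add_smul_eps (a : R) : IsUnit (1 + a • eps : DualNumber A) :=
  isUnit_iff_isUnit_fst.2 (by simp)

theorem one_add_smul_eps_mul (a : R) (x y : A) :
    (1 + a • eps) * (inl x + inr y : DualNumber A) = inl x + inr (y + a • x) := by
  ext <;> simp

theorem smul_one_add_smul_eps_add_smul_inl (c p s : R) (k : A) :
    c • (1 + p • eps) + s • (inl k : DualNumber A)
      = inl (algebraMap R A c + s • k) + inr ((c * p) • 1) := by
  ext <;> simp [Algebra.algebraMap_eq_smul_one, smul_smul]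

theorem one_add_smul_eps_mul_line {c s : R} (hsc : s ^ 2 + c ^ 2 = 1) (p : R) (k : A) :
    (1 + (p * c ^ 2) • eps)
        * (inl (algebraMap R A c + s • k) + inr ((p * s * c) • (s • 1 - c • k)) : DualNumber A)
      = c • (1 + p • eps) + s • inl k := by
  rw [one_add_smul_eps_mul, smul_one_add_smul_eps_add_smul_inl, Algebra.algebraMap_eq_smul_one]
  congr 2
  match_scalars
  · linear_combination p * c * hsc
  · ring

end DualNumber

theorem darboux_eq (p ω : ℝ) :
    darboux p ω = inl (algebraMap ℝ (Quaternion ℝ) (cos (ω / 2)) + sin (ω / 2) • kQ)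
      + inr ((p * sin (ω / 2) * cos (ω / 2)) • (sin (ω / 2) • 1 - cos (ω / 2) • kQ)) := by
  have hsin : sin ω = 2 * sin (ω / 2) * cos (ω / 2) := by
    rw [← sin_two_mul, mul_div_cancel₀ _ two_ne_zero]
  rw [darboux, Quaternion.algebraMap_def, hsin]
  ring_nf

theorem one_add_smul_eps_mul_darboux (p ω : ℝ) :
    (1 + (p * cos (ω / 2) ^ 2) • DualNumber.eps) * darboux p ω
      = cos (ω / 2) • (1 + p • DualNumber.eps) + sin (ω / 2) • inl kQ := by
  rw [darboux_eq, DualNumber.one_add_smul_eps_mul_line (sin_sq_add_cos_sq _)]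

/-- `(1 + pε·cos²(ω/2)) · d(ω) = cos(ω/2)(1 + pε) + sin(ω/2)k`; consequently
`d(ω)` is projectively a point of the real span of `1 + pε` and `k`, i.e. the
vertical Darboux motion is a straight line in `P³(D)`. -/
theorem darboux_is_straight_line (p : ℝ) (ω : ℝ) :
    ((1 : DualNumber (Quaternion ℝ)) + (p * cos (ω / 2) ^ 2) • DualNumber.eps)
        * darboux p ω
      = cos (ω / 2) • ((1 : DualNumber (Quaternion ℝ)) + p • DualNumber.eps)
        + sin (ω / 2) • inl kQ ∧
    ∃ w : (DualNumber (Quaternion ℝ))ˣ,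
      (w : DualNumber (Quaternion ℝ)) * darboux p ω ∈
        Submodule.span ℝ
          ({(1 : DualNumber (Quaternion ℝ)) + p • DualNumber.eps, inl kQ} :
            Set (DualNumber (Quaternion ℝ))) := by
  have hunit := DualNumber.isUnit_one_add_smul_eps (A := Quaternion ℝ) (p * cos (ω / 2) ^ 2)
  refine ⟨one_add_smul_eps_mul_darboux p ω, hunit.unit, ?_⟩
  rw [IsUnit.unit_spec, one_add_smul_eps_mul_darboux]
  exact (Submodule.mem_span_pair (R := ℝ)).2 ⟨_, _, rfl⟩

end
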